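/- Let F be a field with a discrete valuation v with residue field k. For f, g ∈ F^×, define the tame symbol d_v(f,g) = (−1)^{v(f)v(g)} · image of f^{v(g)} g^{−v(f)} in k^×. Then f^{v(g)} g^{−v(f)} is a unit of the valuation ring, and the tame symbol satisfies the Steinberg relation: if f, 1−f ∈ F^×, then d_v(f, 1−f) = 1. -/

import Mathlib

/-!
The valuation of `f ^ v(g) * g ^ (-v(f))` is `v(g) v(f) - v(f) v(g) = 0`. For the Steinberg
relation one compares `v(f)` with `0 = v(1)`, using that `v(a + b) = v(a)` whenever
`v(a) < v(b)`. If `v(f) > 0` then `v(1 - f) = 0` and the symbol is `(1 - f) ^ (-v(f))`; if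
`v(f) = 0` it is `f ^ v(1 - f)`; if `v(f) < 0` then `v(1 - f) = v(f)` and it is
`(-f / (1 - f)) ^ v(f)`. In each case the base is `≡ 1` modulo the maximal ideal, and so is
every integer power of it.
-/

/-- The unit representative of the tame symbol `d_v(f,g)`:
`(-1)^{v(f)v(g)} · f^{v(g)} · g^{-v(f)}`.  Its residue class in `k^×` is the
tame symbol. -/
noncomputable def tameSymbolRep (F : Type*) [Field F] (v : F → ℤ) (f g : F) : F :=
  (-1 : F) ^ (v f * v g) * f ^ (v g) * g ^ (-(v f))

section Valuation

variable {F : Type*} [Field F] {v : F → ℤ}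
  (hmul : ∀ x y : F, x ≠ 0 → y ≠ 0 → v (x * y) = v x + v y)

def unitsValuation : Fˣ →* Multiplicative ℤ :=
  MonoidHom.mk' (fun u => .ofAdd (v u)) fun a b => by
    simp [hmul _ _ a.ne_zero b.ne_zero]

include hmul

lemma val_zpow {x : F} (hx : x ≠ 0) (n : ℤ) : v (x ^ n) = n * v x := by
  have h := congrArg Multiplicative.toAdd (map_zpow (unitsValuation hmul) (Units.mk0 x hx) n)
  simpa [unitsValuation, mul_comm] using h

lemma val_one : v 1 = 0 := by
  simpa using val_zpow hmul one_ne_zero 0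

lemma val_inv {x : F} (hx : x ≠ 0) : v x⁻¹ = -v x := by
  simpa using val_zpow hmul hx (-1)

lemma val_neg {x : F} (hx : x ≠ 0) : v (-x) = v x := by
  have h := val_zpow hmul (neg_ne_zero.mpr (one_ne_zero (α := F))) 2
  rw [zpow_two, neg_one_mul, neg_neg, val_one hmul] at h
  rw [← neg_one_mul, hmul _ _ (neg_ne_zero.mpr one_ne_zero) hx]
  omega

variable (hadd : ∀ x y : F, x ≠ 0 → y ≠ 0 → x + y ≠ 0 → min (v x) (v y) ≤ v (x + y))
include hadd

lemma val_add_eq_of_lt {a b : F} (ha : a ≠ 0) (hb : b ≠ 0) (hab : v a < v b) :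
    v (a + b) = v a := by
  have hsum : a + b ≠ 0 := fun h => by
    rw [add_eq_zero_iff_eq_neg.mp h, val_neg hmul hb] at hab
    exact lt_irrefl _ hab
  have hle := hadd a b ha hb hsum
  have hge := hadd (a + b) (-b) hsum (neg_ne_zero.mpr hb) (by simpa using ha)
  rw [add_neg_cancel_right, val_neg hmul hb] at hge
  omega

end Valuation

section PrincipalUnit

variable {F : Type*} [Field F]

/-- `x ≡ 1` modulo the maximal ideal. The case `x = 1` is split off because `v 0` is
unconstrained. -/
def IsPrincipalUnit (v : F → ℤ) (x : F) : Prop :=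
  x = 1 ∨ 1 ≤ v (x - 1)

lemma IsPrincipalUnit.one {v : F → ℤ} : IsPrincipalUnit v 1 := Or.inl rfl

variable {v : F → ℤ} (hmul : ∀ x y : F, x ≠ 0 → y ≠ 0 → v (x * y) = v x + v y)
  (hadd : ∀ x y : F, x ≠ 0 → y ≠ 0 → x + y ≠ 0 → min (v x) (v y) ≤ v (x + y))
include hmul

namespace IsPrincipalUnit

variable {x y : F}

lemma ne_zero (hx : IsPrincipalUnit v x) : x ≠ 0 := by
  rintro rfl
  rcases hx with h | h
  · exact zero_ne_one h
  · rw [zero_sub, val_neg hmul one_ne_zero, val_one hmul] at h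
    omega

include hadd

lemma val_eq_zero (hx : IsPrincipalUnit v x) : v x = 0 := by
  obtain rfl | hx1 := eq_or_ne x 1
  · exact val_one hmul
  have h := val_add_eq_of_lt hmul hadd one_ne_zero (sub_ne_zero.mpr hx1)
    (by rw [val_one hmul]; exact hx.resolve_left hx1)
  rwa [add_sub_cancel, val_one hmul] at h

lemma mul (hx : IsPrincipalUnit v x) (hy : IsPrincipalUnit v y) : IsPrincipalUnit v (x * y) := by
  obtain rfl | hx1 := eq_or_ne x 1
  · simpa using hy
  obtain rfl | hy1 := eq_or_ne y 1
  · simpa using hx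
  obtain hxy | hxy := eq_or_ne (x * y) 1
  · exact Or.inl hxy
  have hsplit : x * (y - 1) + (x - 1) = x * y - 1 := by ring
  have h := hadd (x * (y - 1)) (x - 1) (mul_ne_zero (hx.ne_zero hmul) (sub_ne_zero.mpr hy1))
    (sub_ne_zero.mpr hx1) (by rw [hsplit]; exact sub_ne_zero.mpr hxy)
  rw [hsplit, hmul _ _ (hx.ne_zero hmul) (sub_ne_zero.mpr hy1), hx.val_eq_zero hmul hadd] at h
  have := hx.resolve_left hx1
  have := hy.resolve_left hy1
  exact Or.inr (by omega)

lemma inv (hx : IsPrincipalUnit v x) : IsPrincipalUnit v x⁻¹ := by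
  obtain rfl | hx1 := eq_or_ne x 1
  · simpa using one
  have hx0 := hx.ne_zero hmul
  have hsub : x - 1 ≠ 0 := sub_ne_zero.mpr hx1
  have hsplit : x⁻¹ - 1 = -(x - 1) * x⁻¹ := by field_simp; ring
  right
  rw [hsplit, hmul _ _ (neg_ne_zero.mpr hsub) (inv_ne_zero hx0), val_neg hmul hsub,
    val_inv hmul hx0, hx.val_eq_zero hmul hadd, neg_zero, add_zero]
  exact hx.resolve_left hx1

lemma zpow (hx : IsPrincipalUnit v x) (n : ℤ) : IsPrincipalUnit v (x ^ n) := by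
  induction n with
  | zero => simpa using one
  | succ n ih => simpa [zpow_add_one₀ (hx.ne_zero hmul)] using ih.mul hmul hadd hx
  | pred n ih => simpa [zpow_sub_one₀ (hx.ne_zero hmul)] using ih.mul hmul hadd (hx.inv hmul hadd)

end IsPrincipalUnit

end PrincipalUnit

section TameSymbol

variable {F : Type*} [Field F] {v : F → ℤ} {f : F}
  (hmul : ∀ x y : F, x ≠ 0 → y ≠ 0 → v (x * y) = v x + v y)
  (hadd : ∀ x y : F, x ≠ 0 → y ≠ 0 → x + y ≠ 0 → min (v x) (v y) ≤ v (x + y))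
include hmul hadd

lemma isPrincipalUnit_tameSymbolRep_one_sub_of_val_pos (hf : f ≠ 0) (hpos : 0 < v f) :
    IsPrincipalUnit v (tameSymbolRep F v f (1 - f)) := by
  have hv : v (1 - f) = 0 := by
    have h := val_add_eq_of_lt hmul hadd one_ne_zero (neg_ne_zero.mpr hf)
      (by rw [val_one hmul, val_neg hmul hf]; exact hpos)
    rwa [← sub_eq_add_neg, val_one hmul] at h
  have hbase : IsPrincipalUnit v (1 - f) :=
    Or.inr (by rw [sub_sub_cancel_left, val_neg hmul hf]; omega)
  simpa [tameSymbolRep, hv] using hbase.zpow hmul hadd (-v f)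

lemma isPrincipalUnit_tameSymbolRep_one_sub_of_val_eq_zero (hf : f ≠ 0) (hzero : v f = 0) :
    IsPrincipalUnit v (tameSymbolRep F v f (1 - f)) := by
  have hrep : tameSymbolRep F v f (1 - f) = f ^ v (1 - f) := by simp [tameSymbolRep, hzero]
  rw [hrep]
  obtain rfl | hf1 := eq_or_ne f 1
  · simpa using IsPrincipalUnit.one
  have hsub : 1 - f ≠ 0 := sub_ne_zero.mpr hf1.symm
  have hnonneg := hadd 1 (-f) one_ne_zero (neg_ne_zero.mpr hf) (by rwa [← sub_eq_add_neg])
  rw [← sub_eq_add_neg, val_one hmul, val_neg hmul hf, hzero, min_self] at hnonneg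
  obtain hv | hv := hnonneg.eq_or_lt
  · simpa [← hv] using IsPrincipalUnit.one
  have hbase : IsPrincipalUnit v f :=
    Or.inr (by rw [← neg_sub, val_neg hmul hsub]; omega)
  exact hbase.zpow hmul hadd _

lemma isPrincipalUnit_tameSymbolRep_one_sub_of_val_neg (hf : f ≠ 0) (hneg : v f < 0) :
    IsPrincipalUnit v (tameSymbolRep F v f (1 - f)) := by
  have hsub : 1 - f ≠ 0 := by
    rintro h
    rw [← eq_of_sub_eq_zero h, val_one hmul] at hneg
    exact lt_irrefl _ hneg
  have hv : v (1 - f) = v f := by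
    have h := val_add_eq_of_lt hmul hadd (neg_ne_zero.mpr hf) one_ne_zero
      (by rw [val_one hmul, val_neg hmul hf]; exact hneg)
    rwa [neg_add_eq_sub, val_neg hmul hf] at h
  have hrep : tameSymbolRep F v f (1 - f) = (-f / (1 - f)) ^ v f := by
    have hsign : (-1 : F) ^ (v f * v f) = (-1) ^ v f := by
      simp [neg_one_zpow_eq_ite, Int.even_mul]
    rw [tameSymbolRep, hv, hsign, div_eq_mul_inv, ← neg_one_mul f, mul_zpow, mul_zpow, inv_zpow']
  have hbase : IsPrincipalUnit v (-f / (1 - f)) := by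
    have hsplit : -f / (1 - f) - 1 = -(1 - f)⁻¹ := by field_simp; ring
    refine Or.inr ?_
    rw [hsplit, val_neg hmul (inv_ne_zero hsub), val_inv hmul hsub, hv]
    omega
  rw [hrep]
  exact hbase.zpow hmul hadd _

lemma isPrincipalUnit_tameSymbolRep_one_sub (hf : f ≠ 0) :
    IsPrincipalUnit v (tameSymbolRep F v f (1 - f)) := by
  rcases lt_trichotomy (v f) 0 with h | h | h
  · exact isPrincipalUnit_tameSymbolRep_one_sub_of_val_neg hmul hadd hf h
  · exact isPrincipalUnit_tameSymbolRep_one_sub_of_val_eq_zero hmul hadd hf h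
  · exact isPrincipalUnit_tameSymbolRep_one_sub_of_val_pos hmul hadd hf h

end TameSymbol

theorem tame_symbol_unit_and_steinberg_general (F : Type*) [Field F] (v : F → ℤ)
    (hmul : ∀ x y : F, x ≠ 0 → y ≠ 0 → v (x * y) = v x + v y)
    (hadd : ∀ x y : F, x ≠ 0 → y ≠ 0 → x + y ≠ 0 → min (v x) (v y) ≤ v (x + y))
    (f g : F) (hf : f ≠ 0) (hg : g ≠ 0) :
    v (f ^ (v g) * g ^ (-(v f))) = 0 ∧
    (g = 1 - f →
      (tameSymbolRep F v f g = 1 ∨ 1 ≤ v (tameSymbolRep F v f g - 1))) := by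
  refine ⟨?_, ?_⟩
  · rw [hmul _ _ (zpow_ne_zero _ hf) (zpow_ne_zero _ hg), val_zpow hmul hf, val_zpow hmul hg]
    ring
  · rintro rfl
    exact isPrincipalUnit_tameSymbolRep_one_sub hmul hadd hf

/-- Let `(F, v)` be a discretely valued field with residue field `k`.  For
`f, g ∈ F^×`, the element `f^{v(g)} g^{-v(f)}` is a unit of the valuation ring
(it has valuation `0`), and the tame symbol satisfies the Steinberg relation: if
`f, 1-f ∈ F^×` then `d_v(f, 1-f) = 1` in `k^×`, i.e. the unit representative
`(-1)^{v(f)v(1-f)} f^{v(1-f)} (1-f)^{-v(f)}` is congruent to `1` modulo the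
maximal ideal. -/
theorem tame_symbol_unit_and_steinberg (F : Type*) [Field F] (v : F → ℤ)
    (hmul : ∀ x y : F, x ≠ 0 → y ≠ 0 → v (x * y) = v x + v y)
    (hadd : ∀ x y : F, x ≠ 0 → y ≠ 0 → x + y ≠ 0 → min (v x) (v y) ≤ v (x + y))
    (hsurj : ∀ n : ℤ, ∃ x : F, x ≠ 0 ∧ v x = n)
    (f g : F) (hf : f ≠ 0) (hg : g ≠ 0) :
    v (f ^ (v g) * g ^ (-(v f))) = 0 ∧
    (g = 1 - f →
      (tameSymbolRep F v f g = 1 ∨ 1 ≤ v (tameSymbolRep F v f g - 1))) :=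
  tame_symbol_unit_and_steinberg_general F v hmul hadd f g hf hg
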